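/- arXiv:math/9902142 — 2 statements merged into one kernel-verified Lean document; each statement's English description precedes it below -/
import Mathlib

section
/- Let L₁, L₂ be a Fredholm pair of closed subspaces of a Hilbert space H (i.e., dim(L₁ ∩ L₂) < ∞ and L₁ + L₂ is closed of finite codimension). If L₂' ⊆ L₂ is a closed subspace of finite codimension in L₂, then (L₁, L₂') is also a Fredholm pair. -/
/-!
The sum map `T : L₁ × L₂ → H`, `(a, b) ↦ a + b`, has closed range `L₁ + L₂` and kernel
`{(x, -x) | x ∈ L₁ ∩ L₂}`, which is finite-dimensional. By the open mapping theorem `T` is a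
quotient map onto its range, so it sends closed subspaces containing its kernel to closed
subspaces; adding the finite-dimensional kernel to an arbitrary closed subspace keeps it closed,
hence `L₁ + L₂' = T (L₁ × L₂')` is closed. For the codimension, `L₂ ⊆ L₂' + F` for some
finite-dimensional `F`, so `L₁ + L₂'` has finite codimension in `L₁ + L₂' + F ⊇ L₁ + L₂`.
-/

/-- A pair of closed subspaces of a Hilbert space is a Fredholm pair if its intersection is
finite dimensional and its sum is closed of finite codimension. -/
def FredholmPair {H : Type*} [NormedAddCommGroup H] [InnerProductSpace ℝ H]
    (A B : Submodule ℝ H) : Prop :=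
  FiniteDimensional ℝ ↥(A ⊓ B) ∧ IsClosed ((A ⊔ B : Submodule ℝ H) : Set H) ∧
    FiniteDimensional ℝ (H ⧸ (A ⊔ B))

namespace ContinuousLinearMap

variable {𝕜 E F : Type*} [NontriviallyNormedField 𝕜]
  [NormedAddCommGroup E] [NormedSpace 𝕜 E] [CompleteSpace E]
  [NormedAddCommGroup F] [NormedSpace 𝕜 F] [CompleteSpace F]

theorem isClosed_map_of_ker_le (f : E →L[𝕜] F) (hf : IsClosed ((f : E →ₗ[𝕜] F).range : Set F))
    {S : Submodule 𝕜 E} (hS : IsClosed (S : Set E)) (hker : (f : E →ₗ[𝕜] F).ker ≤ S) :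
    IsClosed (S.map (f : E →ₗ[𝕜] F) : Set F) := by
  have : CompleteSpace (f : E →ₗ[𝕜] F).range := hf.completeSpace_coe
  have hquot := f.rangeRestrict.isQuotientMap (LinearMap.surjective_rangeRestrict _)
  have hclosed : IsClosed (S.map (f.rangeRestrict : E →ₗ[𝕜] (f : E →ₗ[𝕜] F).range) :
      Set (f : E →ₗ[𝕜] F).range) := by
    rw [← hquot.isClosed_preimage]
    change IsClosed ((S.map _).comap (f.rangeRestrict : E →ₗ[𝕜] (f : E →ₗ[𝕜] F).range) : Set E)
    rw [Submodule.comap_map_eq, toLinearMap_rangeRestrict, LinearMap.ker_rangeRestrict,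
      sup_eq_left.2 hker]
    exact hS
  have := (Submodule.isClosedEmbedding_subtype _ hf).isClosedMap _ hclosed
  rwa [← Submodule.map_coe, ← Submodule.map_comp, toLinearMap_rangeRestrict,
    LinearMap.rangeRestrict, LinearMap.subtype_comp_codRestrict] at this

theorem isClosed_map_of_finiteDimensional_ker [CompleteSpace 𝕜] (f : E →L[𝕜] F)
    (hf : IsClosed ((f : E →ₗ[𝕜] F).range : Set F)) [FiniteDimensional 𝕜 (f : E →ₗ[𝕜] F).ker]
    {S : Submodule 𝕜 E} (hS : IsClosed (S : Set E)) :
    IsClosed (S.map (f : E →ₗ[𝕜] F) : Set F) := by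
  have := f.isClosed_map_of_ker_le hf (S.isClosed_sup_finiteDimensional _ hS) le_sup_right
  rwa [Submodule.map_sup, LinearMap.le_ker_iff_map.1 le_rfl, sup_bot_eq] at this

end ContinuousLinearMap

namespace Submodule

theorem ker_subtype_coprod_subtype {R M : Type*} [Ring R] [AddCommGroup M] [Module R M]
    (p q : Submodule R M) :
    (p.subtype.coprod q.subtype).ker =
      ((inclusion inf_le_left).prod (-inclusion inf_le_right) : ↥(p ⊓ q) →ₗ[R] p × q).range := by
  ext x
  constructor
  · intro h
    have hx : (x.1 : M) = -x.2 := eq_neg_of_add_eq_zero_left h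
    exact ⟨⟨x.1, x.1.2, hx ▸ q.neg_mem x.2.2⟩, by ext <;> simp [hx]⟩
  · rintro ⟨y, rfl⟩
    simp

section Field

variable {K V : Type*} [DivisionRing K] [AddCommGroup V] [Module K V]

theorem CoFG.of_sup_fg {p q : Submodule K V} (hpq : (p ⊔ q).CoFG) (hq : q.FG) : p.CoFG := by
  obtain ⟨r, hr⟩ := (p ⊔ q).exists_isCompl
  refine (hq.sup (hpq.fg_of_isCompl hr)).cofg_of_codisjoint ?_
  have := hr.codisjoint
  rw [codisjoint_iff] at this ⊢
  rw [← this, sup_comm, sup_assoc]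

theorem exists_fg_le_sup_of_cofg_comap {p q : Submodule K V} (h : (q.comap p.subtype).CoFG) :
    ∃ r : Submodule K V, r.FG ∧ p ≤ q ⊔ r := by
  obtain ⟨c, hc⟩ := (q.comap p.subtype).exists_isCompl
  refine ⟨c.map p.subtype, (h.fg_of_isCompl hc).map _, ?_⟩
  calc p = (⊤ : Submodule K p).map p.subtype := by rw [map_top, range_subtype]
    _ = p ⊓ q ⊔ c.map p.subtype := by rw [← hc.sup_eq_top, map_sup, map_comap_subtype]
    _ ≤ q ⊔ c.map p.subtype := sup_le_sup_right inf_le_right _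

end Field

section Normed

variable {𝕜 E : Type*} [NontriviallyNormedField 𝕜] [CompleteSpace 𝕜]
  [NormedAddCommGroup E] [NormedSpace 𝕜 E] [CompleteSpace E]

theorem isClosed_sup_of_le_of_isClosed_sup {p q q' : Submodule 𝕜 E} (hp : IsClosed (p : Set E))
    (hq : IsClosed (q : Set E)) (hq' : IsClosed (q' : Set E)) (hle : q' ≤ q)
    (hpq : IsClosed ((p ⊔ q : Submodule 𝕜 E) : Set E)) [FiniteDimensional 𝕜 ↥(p ⊓ q)] :
    IsClosed ((p ⊔ q' : Submodule 𝕜 E) : Set E) := by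
  have : CompleteSpace p := hp.completeSpace_coe
  have : CompleteSpace q := hq.completeSpace_coe
  let T : p × q →L[𝕜] E := p.subtypeL.coprod q.subtypeL
  have hT : (T : p × q →ₗ[𝕜] E) = p.subtype.coprod q.subtype := rfl
  have : FiniteDimensional 𝕜 (T : p × q →ₗ[𝕜] E).ker := by
    rw [hT, ker_subtype_coprod_subtype]
    infer_instance
  have hrange : (T : p × q →ₗ[𝕜] E).range = p ⊔ q := by rw [hT, sup_eq_range]
  have hmap : ((⊤ : Submodule 𝕜 p).prod (q'.comap q.subtype)).map (T : p × q →ₗ[𝕜] E) =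
      p ⊔ q' := by
    rw [hT, LinearMap.coprod_map_prod, map_top, range_subtype, map_comap_subtype,
      inf_eq_right.2 hle]
  rw [← hmap]
  refine T.isClosed_map_of_finiteDimensional_ker (hrange ▸ hpq) ?_
  rw [prod_coe]
  exact isClosed_univ.prod (hq'.preimage continuous_subtype_val)

end Normed

end Submodule

/-- If `(L₁, L₂)` is a Fredholm pair of closed subspaces and `L₂' ⊆ L₂` is closed of finite
codimension in `L₂`, then `(L₁, L₂')` is also a Fredholm pair. -/
theorem fredholmPair_of_finite_codim_subspace
    {H : Type*} [NormedAddCommGroup H] [InnerProductSpace ℝ H] [CompleteSpace H]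
    (L1 L2 L2' : Submodule ℝ H)
    (hL1 : IsClosed (L1 : Set H)) (hL2 : IsClosed (L2 : Set H))
    (hL2' : IsClosed ((L2' : Set H)))
    (hle : L2' ≤ L2)
    (hFred : FredholmPair L1 L2)
    (hcodim : FiniteDimensional ℝ (↥L2 ⧸ (L2'.comap L2.subtype))) :
    FredholmPair L1 L2' := by
  obtain ⟨hinf, hclosed, hcofg⟩ := hFred
  obtain ⟨F, hF, hL2F⟩ := Submodule.exists_fg_le_sup_of_cofg_comap hcodim
  have hsup : L1 ⊔ L2 ≤ L1 ⊔ L2' ⊔ F := by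
    rw [sup_assoc]
    exact sup_le_sup_left hL2F L1
  exact ⟨Submodule.finiteDimensional_of_le (inf_le_inf_left L1 hle),
    Submodule.isClosed_sup_of_le_of_isClosed_sup hL1 hL2 hL2' hle hclosed,
    (Submodule.CoFG.of_le hsup hcofg).of_sup_fg hF⟩
end

section
/- Let H = V ⊕ W be an orthogonal decomposition of a Hilbert space and let k_r : V → W be a family of bounded operators depending on a real parameter r such that ‖k_r - k_0‖ → 0 as r → 0. Then the orthogonal projections P_r onto the graphs Γ(k_r) converge in operator norm to the orthogonal projection P_0 onto Γ(k_0) as r → 0. -/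
/-!
Each graph lies within relative distance `‖k₁ - k₂‖` of the other: move `v + k₁ v` to
`v + k₂ v`, and note `‖v‖ ≤ ‖v + k₁ v‖` since `V ⊥ W`. For orthogonal projections `P`, `Q` onto
two subspaces that are `ε`-close in this sense, split `(P - Q) x = (P (Q x) - Q x) + P (x - Q x)`;
the first term is at most `ε ‖x‖`, and for `z ⊥ range Q` the identity
`‖P z‖² = re ⟪P z - Q (P z), z⟫` bounds the second by `ε ‖x‖` as well, so `‖P - Q‖ ≤ 2 ε`.
-/

/-- The graph `Γ(k) = {v + k v : v ∈ V}` as a subspace of `H`. -/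
noncomputable def graphSub {H : Type*} [NormedAddCommGroup H] [InnerProductSpace ℝ H]
    (V W : Submodule ℝ H) (k : V →L[ℝ] W) : Submodule ℝ H :=
  LinearMap.range (V.subtype + W.subtype.comp (k : V →ₗ[ℝ] W))

namespace Submodule

variable {𝕜 E : Type*} [RCLike 𝕜] [NormedAddCommGroup E] [InnerProductSpace 𝕜 E]

theorem exists_hasOrthogonalProjection_eq_starProjection {K : Submodule 𝕜 E} {Q : E →L[𝕜] E}
    (hQ : ∀ x, Q x ∈ K ∧ x - Q x ∈ Kᗮ) :
    ∃ _ : K.HasOrthogonalProjection, Q = K.starProjection :=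
  let _ : K.HasOrthogonalProjection := ⟨fun x => ⟨Q x, hQ x⟩⟩
  ⟨‹_›, ContinuousLinearMap.ext fun x =>
    (eq_starProjection_of_mem_orthogonal (hQ x).1 (hQ x).2).symm⟩

theorem norm_sub_starProjection_le (K : Submodule 𝕜 E) [K.HasOrthogonalProjection]
    (y : E) {n : E} (hn : n ∈ K) : ‖y - K.starProjection y‖ ≤ ‖y - n‖ := by
  rw [starProjection_minimal]
  exact ciInf_le ⟨0, Set.forall_mem_range.mpr fun _ => norm_nonneg _⟩ (⟨n, hn⟩ : K)

variable {K L : Submodule 𝕜 E} [K.HasOrthogonalProjection] [L.HasOrthogonalProjection] {ε : ℝ}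

theorem norm_starProjection_apply_le_of_mem_orthogonal (hε : 0 ≤ ε)
    (hLK : ∀ y ∈ L, ‖y - K.starProjection y‖ ≤ ε * ‖y‖) {z : E} (hz : z ∈ Kᗮ) :
    ‖L.starProjection z‖ ≤ ε * ‖z‖ := by
  set y := L.starProjection z
  have hKy : inner 𝕜 (K.starProjection y) z = 0 := inner_right_of_mem_orthogonal (by simp) hz
  have hsq : ‖y‖ ^ 2 ≤ ε * ‖z‖ * ‖y‖ :=
    calc ‖y‖ ^ 2 = RCLike.re (inner 𝕜 y z) := by
          rw [re_inner_starProjection_eq_normSq, coe_norm, ← starProjection_apply]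
      _ = RCLike.re (inner 𝕜 (y - K.starProjection y) z) := by rw [inner_sub_left, hKy, sub_zero]
      _ ≤ ‖y - K.starProjection y‖ * ‖z‖ := re_inner_le_norm _ _
      _ ≤ ε * ‖y‖ * ‖z‖ := by gcongr; exact hLK y (by simp [y])
      _ = ε * ‖z‖ * ‖y‖ := by ring
  rcases (norm_nonneg y).eq_or_lt with hy | hy
  · rw [← hy]; positivity
  · nlinarith

theorem norm_starProjection_sub_starProjection_le (hε : 0 ≤ ε)
    (hKL : ∀ y ∈ K, ‖y - L.starProjection y‖ ≤ ε * ‖y‖)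
    (hLK : ∀ y ∈ L, ‖y - K.starProjection y‖ ≤ ε * ‖y‖) :
    ‖K.starProjection - L.starProjection‖ ≤ 2 * ε := by
  refine ContinuousLinearMap.opNorm_le_bound _ (by positivity) fun x => ?_
  have hsplit : (K.starProjection - L.starProjection) x =
      (K.starProjection (L.starProjection x) - L.starProjection x) +
        K.starProjection (x - L.starProjection x) := by
    simp only [sub_apply, map_sub]; abel
  have hLx : ‖L.starProjection x‖ ≤ ‖x‖ := L.norm_starProjection_apply_le x
  have hLx' : ‖x - L.starProjection x‖ ≤ ‖x‖ := by
    simpa using Lᗮ.norm_starProjection_apply_le x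
  calc ‖(K.starProjection - L.starProjection) x‖
      ≤ ‖L.starProjection x - K.starProjection (L.starProjection x)‖ +
          ‖K.starProjection (x - L.starProjection x)‖ := by
        rw [hsplit, norm_sub_rev]; exact norm_add_le _ _
    _ ≤ ε * ‖L.starProjection x‖ + ε * ‖x - L.starProjection x‖ :=
        add_le_add (hLK _ (by simp)) <| norm_starProjection_apply_le_of_mem_orthogonal hε hKL
          (sub_starProjection_mem_orthogonal x)
    _ ≤ ε * ‖x‖ + ε * ‖x‖ := by gcongr
    _ = 2 * ε * ‖x‖ := by ring

end Submodule

section graph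

variable {H : Type*} [NormedAddCommGroup H] [InnerProductSpace ℝ H] {V W : Submodule ℝ H}

theorem mem_graphSub {k : V →L[ℝ] W} {x : H} :
    x ∈ graphSub V W k ↔ ∃ v : V, (v : H) + (k v : H) = x := by
  simp [graphSub, LinearMap.mem_range]

theorem norm_le_norm_add_of_le_orthogonal (horth : W ≤ Vᗮ) (v : V) (w : W) :
    ‖(v : H)‖ ≤ ‖(v : H) + (w : H)‖ := by
  have hpyth := norm_add_sq_eq_norm_sq_add_norm_sq_real (horth w.2 v v.2)
  exact (mul_self_le_mul_self_iff (norm_nonneg _) (norm_nonneg _)).2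
    (by nlinarith [mul_self_nonneg ‖(w : H)‖])

theorem norm_sub_starProjection_graphSub_le (horth : W ≤ Vᗮ) (k₁ k₂ : V →L[ℝ] W)
    [(graphSub V W k₂).HasOrthogonalProjection] {y : H} (hy : y ∈ graphSub V W k₁) :
    ‖y - (graphSub V W k₂).starProjection y‖ ≤ ‖k₁ - k₂‖ * ‖y‖ := by
  obtain ⟨v, rfl⟩ := mem_graphSub.mp hy
  have hnear : (v : H) + (k₂ v : H) ∈ graphSub V W k₂ := mem_graphSub.mpr ⟨v, rfl⟩
  calc _ ≤ ‖(v : H) + (k₁ v : H) - ((v : H) + (k₂ v : H))‖ :=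
        (graphSub V W k₂).norm_sub_starProjection_le _ hnear
    _ = ‖(k₁ - k₂) v‖ := by rw [add_sub_add_left_eq_sub]; rfl
    _ ≤ ‖k₁ - k₂‖ * ‖v‖ := (k₁ - k₂).le_opNorm v
    _ ≤ ‖k₁ - k₂‖ * ‖(v : H) + (k₁ v : H)‖ := by
        gcongr; exact norm_le_norm_add_of_le_orthogonal horth v (k₁ v)

theorem norm_starProjection_graphSub_sub_le (horth : W ≤ Vᗮ) (k₁ k₂ : V →L[ℝ] W)
    [(graphSub V W k₁).HasOrthogonalProjection] [(graphSub V W k₂).HasOrthogonalProjection] :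
    ‖(graphSub V W k₁).starProjection - (graphSub V W k₂).starProjection‖ ≤ 2 * ‖k₁ - k₂‖ :=
  Submodule.norm_starProjection_sub_starProjection_le (by positivity)
    (fun _ hy => norm_sub_starProjection_graphSub_le horth k₁ k₂ hy)
    (fun _ hy => by
      simpa [norm_sub_rev k₁] using norm_sub_starProjection_graphSub_le horth k₂ k₁ hy)

end graph

theorem graph_projections_tendsto_of_tendsto_general
    {H : Type*} [NormedAddCommGroup H] [InnerProductSpace ℝ H]
    (V W : Submodule ℝ H)
    (horth : W ≤ Vᗮ)
    (k : ℝ → (V →L[ℝ] W))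
    (hk : Filter.Tendsto (fun r => ‖k r - k 0‖) (nhds 0) (nhds 0))
    (P : ℝ → (H →L[ℝ] H))
    (hP : ∀ r, ∀ x : H, P r x ∈ graphSub V W (k r) ∧ x - P r x ∈ (graphSub V W (k r))ᗮ) :
    Filter.Tendsto P (nhds 0) (nhds (P 0)) := by
  have hbound : ∀ r, ‖P r - P 0‖ ≤ 2 * ‖k r - k 0‖ := by
    intro r
    obtain ⟨_, hPr⟩ := Submodule.exists_hasOrthogonalProjection_eq_starProjection (hP r)
    obtain ⟨_, hP0⟩ := Submodule.exists_hasOrthogonalProjection_eq_starProjection (hP 0)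
    rw [hPr, hP0]
    exact norm_starProjection_graphSub_sub_le horth (k r) (k 0)
  rw [tendsto_iff_norm_sub_tendsto_zero]
  exact squeeze_zero (fun _ => norm_nonneg _) hbound (by simpa using hk.const_mul 2)

/-- If `k_r : V → W` is a family of bounded operators with `‖k_r - k_0‖ → 0` as `r → 0`,
then the orthogonal projections `P_r` onto the graphs `Γ(k_r)` converge in operator norm to
the orthogonal projection onto `Γ(k_0)`. -/
theorem graph_projections_tendsto_of_tendsto
    {H : Type*} [NormedAddCommGroup H] [InnerProductSpace ℝ H] [CompleteSpace H]
    (V W : Submodule ℝ H)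
    (hV : IsClosed (V : Set H)) (hW : IsClosed (W : Set H))
    (horth : W ≤ Vᗮ) (hsup : V ⊔ W = ⊤)
    (k : ℝ → (V →L[ℝ] W))
    (hk : Filter.Tendsto (fun r => ‖k r - k 0‖) (nhds 0) (nhds 0))
    (P : ℝ → (H →L[ℝ] H))
    (hP : ∀ r, ∀ x : H, P r x ∈ graphSub V W (k r) ∧ x - P r x ∈ (graphSub V W (k r))ᗮ) :
    Filter.Tendsto P (nhds 0) (nhds (P 0)) :=
  graph_projections_tendsto_of_tendsto_general V W horth k hk P hP
end
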